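/- Fix s ∈ ℝ. A bounded subset Q of the Sobolev space H^s(ℝ) is equicontinuous in H^s (i.e. sup_{f∈Q} sup_{|y|<δ} ‖f(·+y) − f‖_{H^s} → 0 as δ → 0) if and only if lim_{κ→∞} sup_{f∈Q} ∫_{|ξ|≥κ} (1+|ξ|)^{2s} |f̂(ξ)|² dξ = 0. -/

import Mathlib

open MeasureTheory Complex Filter Topology Set ENNReal

noncomputable section

/-!  Elements of the Sobolev space `Hˢ(ℝ)` (for arbitrary `s ∈ ℝ`) are represented by their
Fourier transforms `w = f̂` (with the convention `f̂(ξ) = (2π)^{-1/2} ∫ e^{-iξx} f(x) dx`), via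
Plancherel's theorem.  Under this identification the squared `Hˢ` norm of `f` is
`∫ (1+|ξ|)^{2s} |w(ξ)|² dξ` and the translate `f(·+y)` corresponds to `e^{iyξ} w(ξ)`, so that
`‖f(·+y) − f‖²_{Hˢ} = ∫ (1+|ξ|)^{2s} |(e^{iyξ}−1) w(ξ)|² dξ`.

Since `|e^{iθ} − 1|² = 2 − 2 cos θ`, this is `∫ (2 − 2 cos yξ) dμ_w(ξ)` for the measure
`dμ_w = (1+|ξ|)^{2s} |w(ξ)|² dξ`. The symbol is at most `4` everywhere and at most `(yκ)²` on
`|ξ| < κ`, so uniformly small tails together with the bound on `μ_w(ℝ)` give equicontinuity.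
Conversely, the average of the symbol over `y ∈ (0, d]` is at least `1` once `|ξ| ≥ 2/d`, so by
Tonelli the tail mass of `μ_w` beyond `2/d` is at most the supremum of `‖f(·+y) − f‖²_{Hˢ}`
over `0 < y ≤ d`. -/

def HsNormSqW (s : ℝ) (w : ℝ → ℂ) : ℝ≥0∞ :=
  ∫⁻ ξ : ℝ, ENNReal.ofReal ((1 + |ξ|) ^ (2 * s)) * (‖w ξ‖₊ : ℝ≥0∞) ^ 2

def translationModulus (g : ℝ → ℝ≥0∞) (y : ℝ) : ℝ≥0∞ :=
  ∫⁻ ξ, ENNReal.ofReal (2 - 2 * Real.cos (y * ξ)) * g ξ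

def tailMass (g : ℝ → ℝ≥0∞) (κ : ℝ) : ℝ≥0∞ :=
  ∫⁻ ξ in {ξ | κ ≤ |ξ|}, g ξ

def hsDensity (s : ℝ) (w : ℝ → ℂ) (ξ : ℝ) : ℝ≥0∞ :=
  ENNReal.ofReal ((1 + |ξ|) ^ (2 * s)) * (‖w ξ‖₊ : ℝ≥0∞) ^ 2

theorem measurableSet_abs_ge (κ : ℝ) : MeasurableSet {ξ : ℝ | κ ≤ |ξ|} :=
  measurableSet_le measurable_const continuous_abs.measurable

theorem nnnorm_exp_I_mul_ofReal_sub_one_sq (θ : ℝ) :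
    (‖exp (I * θ) - 1‖₊ : ℝ≥0∞) ^ 2 = ENNReal.ofReal (2 - 2 * Real.cos θ) := by
  rw [← ENNReal.ofReal_coe_nnreal, coe_nnnorm, ← ENNReal.ofReal_pow (norm_nonneg _),
    norm_exp_I_mul_ofReal_sub_one, Real.norm_eq_abs, sq_abs]
  have hcos : Real.cos θ = 1 - 2 * Real.sin (θ / 2) ^ 2 := by
    rw [← Real.cos_two_mul_eq_one_sub, mul_div_cancel₀ θ two_ne_zero]
  rw [hcos]
  ring_nf

theorem HsNormSqW_exp_mul_sub_one_mul (s y : ℝ) (w : ℝ → ℂ) :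
    HsNormSqW s (fun ξ => (exp (I * y * ξ) - 1) * w ξ) = translationModulus (hsDensity s w) y := by
  refine lintegral_congr fun ξ => ?_
  rw [hsDensity, nnnorm_mul, ENNReal.coe_mul, mul_pow, ← nnnorm_exp_I_mul_ofReal_sub_one_sq]
  push_cast
  ring_nf

theorem aemeasurable_hsDensity (s : ℝ) {w : ℝ → ℂ} (hw : AEStronglyMeasurable w) :
    AEMeasurable (hsDensity s w) :=
  (by fun_prop : Measurable fun ξ : ℝ => ENNReal.ofReal ((1 + |ξ|) ^ (2 * s))).aemeasurable.mul
    (hw.enorm.pow_const 2)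

theorem le_setLIntegral_Ioc_two_sub_two_cos {d ξ : ℝ} (hd : 0 < d) (hξ : 2 ≤ d * |ξ|) :
    ENNReal.ofReal d ≤ ∫⁻ y in Ioc 0 d, ENNReal.ofReal (2 - 2 * Real.cos (y * ξ)) := by
  have hξ0 : 0 < |ξ| := pos_of_mul_pos_right (two_pos.trans_le hξ) hd.le
  have hint : ∫ y in Ioc 0 d, (2 - 2 * Real.cos (y * ξ)) = 2 * d - 2 * (Real.sin (d * ξ) / ξ) := by
    rw [← intervalIntegral.integral_of_le hd.le, intervalIntegral.integral_sub (by simp)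
      (by apply Continuous.intervalIntegrable; fun_prop), intervalIntegral.integral_const_mul,
      intervalIntegral.integral_comp_mul_right Real.cos (abs_pos.1 hξ0)]
    simp [integral_cos, div_eq_inv_mul, mul_comm]
  have hsin : Real.sin (d * ξ) / ξ ≤ 1 / |ξ| := calc
    Real.sin (d * ξ) / ξ ≤ |Real.sin (d * ξ) / ξ| := le_abs_self _
    _ = |Real.sin (d * ξ)| / |ξ| := abs_div _ _
    _ ≤ 1 / |ξ| := by gcongr; exact Real.abs_sin_le_one _
  have hinv : 1 / |ξ| ≤ d / 2 := by
    rw [div_le_div_iff₀ hξ0 two_pos]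
    linarith
  rw [← ofReal_integral_eq_lintegral_ofReal]
  · exact ENNReal.ofReal_le_ofReal (by rw [hint]; linarith)
  · exact (Continuous.integrableOn_Icc (by fun_prop)).mono_set Ioc_subset_Icc_self
  · exact Eventually.of_forall fun y => by
      simp only [Pi.zero_apply]
      linarith [Real.cos_le_one (y * ξ)]

theorem tailMass_le_of_translationModulus_le {g : ℝ → ℝ≥0∞} (hg : AEMeasurable g)
    {d κ : ℝ} (hd : 0 < d) (hκ : 2 ≤ d * κ) {R : ℝ≥0∞}
    (h : ∀ y ∈ Ioc 0 d, translationModulus g y ≤ R) :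
    tailMass g κ ≤ R := by
  set T : Set ℝ := {ξ | κ ≤ |ξ|}
  refine (ENNReal.mul_le_mul_iff_right (ofReal_pos.2 hd).ne' ofReal_ne_top).1 ?_
  calc ENNReal.ofReal d * ∫⁻ ξ in T, g ξ
      = ∫⁻ ξ in T, ENNReal.ofReal d * g ξ := (lintegral_const_mul' _ _ ofReal_ne_top).symm
    _ ≤ ∫⁻ ξ in T, ∫⁻ y in Ioc 0 d, ENNReal.ofReal (2 - 2 * Real.cos (y * ξ)) * g ξ := by
        refine setLIntegral_mono' (measurableSet_abs_ge κ) fun ξ hξ => ?_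
        rw [lintegral_mul_const _ (by fun_prop)]
        gcongr
        exact le_setLIntegral_Ioc_two_sub_two_cos hd
          (hκ.trans (mul_le_mul_of_nonneg_left hξ hd.le))
    _ = ∫⁻ y in Ioc 0 d, ∫⁻ ξ in T, ENNReal.ofReal (2 - 2 * Real.cos (y * ξ)) * g ξ :=
        lintegral_lintegral_swap <| (by fun_prop : Measurable fun p : ℝ × ℝ =>
          ENNReal.ofReal (2 - 2 * Real.cos (p.2 * p.1))).aemeasurable.mul
          (hg.restrict.comp_quasiMeasurePreserving Measure.quasiMeasurePreserving_fst)
    _ ≤ ∫⁻ _ in Ioc 0 d, R :=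
        setLIntegral_mono' measurableSet_Ioc fun y hy =>
          (setLIntegral_le_lintegral _ _).trans (h y hy)
    _ = ENNReal.ofReal d * R := by rw [setLIntegral_const, Real.volume_Ioc, sub_zero, mul_comm]

theorem translationModulus_le (g : ℝ → ℝ≥0∞) (y κ : ℝ) :
    translationModulus g y ≤ 4 * tailMass g κ + ENNReal.ofReal ((y * κ) ^ 2) * ∫⁻ ξ, g ξ := by
  set T : Set ℝ := {ξ | κ ≤ |ξ|}
  rw [translationModulus, ← lintegral_add_compl _ (measurableSet_abs_ge κ)]
  refine add_le_add ?_ ?_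
  · calc ∫⁻ ξ in T, ENNReal.ofReal (2 - 2 * Real.cos (y * ξ)) * g ξ
        ≤ ∫⁻ ξ in T, 4 * g ξ := by
          refine lintegral_mono fun ξ => mul_le_mul_left ?_ _
          rw [← ENNReal.ofReal_ofNat 4]
          exact ENNReal.ofReal_le_ofReal (by linarith [Real.neg_one_le_cos (y * ξ)])
      _ = 4 * tailMass g κ := lintegral_const_mul' _ _ (by norm_num)
  · calc ∫⁻ ξ in Tᶜ, ENNReal.ofReal (2 - 2 * Real.cos (y * ξ)) * g ξ
        ≤ ∫⁻ ξ in Tᶜ, ENNReal.ofReal ((y * κ) ^ 2) * g ξ := by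
          refine setLIntegral_mono' (measurableSet_abs_ge κ).compl
            fun ξ hξ => mul_le_mul_left ?_ _
          have hξκ : ξ ^ 2 ≤ κ ^ 2 := by
            have : |ξ| < κ := not_le.1 hξ
            nlinarith [abs_nonneg ξ, sq_abs ξ]
          refine ENNReal.ofReal_le_ofReal ?_
          nlinarith [Real.one_sub_sq_div_two_le_cos (x := y * ξ), sq_nonneg y]
      _ = ENNReal.ofReal ((y * κ) ^ 2) * ∫⁻ ξ in Tᶜ, g ξ :=
          lintegral_const_mul' _ _ ofReal_ne_top
      _ ≤ ENNReal.ofReal ((y * κ) ^ 2) * ∫⁻ ξ, g ξ := by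
          gcongr
          exact Measure.restrict_le_self

theorem tendsto_iSup_tailMass_of_translationModulus_le {α : Type*} {S : Set α}
    {g : α → ℝ → ℝ≥0∞} (hg : ∀ i ∈ S, AEMeasurable (g i))
    (h : ∀ r > (0 : ℝ), ∃ δ > (0 : ℝ), ∀ i ∈ S, ∀ y : ℝ, |y| < δ →
      translationModulus (g i) y ≤ ENNReal.ofReal r) :
    Tendsto (fun κ => ⨆ i ∈ S, tailMass (g i) κ) atTop (𝓝 0) := by
  rw [ENNReal.tendsto_atTop_zero]
  intro ε hε
  obtain ⟨r, -, hr, hrε⟩ := ENNReal.lt_iff_exists_real_btwn.1 hε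
  obtain ⟨δ, hδ, hmod⟩ := h r (ofReal_pos.1 hr)
  refine ⟨4 / δ, fun κ hκ => iSup₂_le fun i hi => le_trans ?_ hrε.le⟩
  refine tailMass_le_of_translationModulus_le (hg i hi) (half_pos hδ) ?_ fun y hy => hmod i hi y ?_
  · linarith [(div_le_iff₀ hδ).1 hκ]
  · rw [abs_of_pos hy.1]
    linarith [hy.2]

theorem translationModulus_le_of_tendsto_iSup_tailMass {α : Type*} {S : Set α}
    {g : α → ℝ → ℝ≥0∞} {C : ℝ≥0∞} (hC : C ≠ ∞) (hbdd : ∀ i ∈ S, ∫⁻ ξ, g i ξ ≤ C)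
    (h : Tendsto (fun κ => ⨆ i ∈ S, tailMass (g i) κ) atTop (𝓝 0)) :
    ∀ r > (0 : ℝ), ∃ δ > (0 : ℝ), ∀ i ∈ S, ∀ y : ℝ, |y| < δ →
      translationModulus (g i) y ≤ ENNReal.ofReal r := by
  intro r hr
  obtain ⟨κ, hκ⟩ := ENNReal.tendsto_atTop_zero.1 h (ENNReal.ofReal (r / 8)) (by positivity)
  have hlow : Tendsto (fun y : ℝ => ENNReal.ofReal ((y * κ) ^ 2) * C) (𝓝 0) (𝓝 0) := by
    have : Tendsto (fun y : ℝ => ENNReal.ofReal ((y * κ) ^ 2)) (𝓝 0) (𝓝 0) := by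
      simpa using ENNReal.tendsto_ofReal
        ((by fun_prop : Continuous fun y : ℝ => (y * κ) ^ 2).tendsto 0)
    simpa using ENNReal.Tendsto.mul_const this (Or.inr hC)
  obtain ⟨δ, hδ, hlowδ⟩ := Metric.eventually_nhds_iff.1
    (hlow.eventually_lt_const (ofReal_pos.2 (half_pos hr)))
  refine ⟨δ, hδ, fun i hi y hy => ?_⟩
  have htail : tailMass (g i) κ ≤ ENNReal.ofReal (r / 8) :=
    (le_iSup₂_of_le i hi le_rfl).trans (hκ κ le_rfl)
  calc translationModulus (g i) y
      ≤ 4 * tailMass (g i) κ + ENNReal.ofReal ((y * κ) ^ 2) * ∫⁻ ξ, g i ξ :=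
        translationModulus_le _ y κ
    _ ≤ 4 * ENNReal.ofReal (r / 8) + ENNReal.ofReal (r / 2) := by
        refine add_le_add (by gcongr) ?_
        calc ENNReal.ofReal ((y * κ) ^ 2) * ∫⁻ ξ, g i ξ
            ≤ ENNReal.ofReal ((y * κ) ^ 2) * C := by gcongr; exact hbdd i hi
          _ ≤ ENNReal.ofReal (r / 2) := (hlowδ (by simpa using hy)).le
    _ = ENNReal.ofReal r := by
        rw [show (4 : ℝ≥0∞) = ENNReal.ofReal 4 by norm_num, ← ENNReal.ofReal_mul (by norm_num),
          ← ofReal_add (by positivity) (by positivity)]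
        ring_nf

/-- A bounded subset `Q` of `Hˢ(ℝ)` is equicontinuous in `Hˢ` (i.e.
`sup_{f∈Q} sup_{|y|<δ} ‖f(·+y) − f‖_{Hˢ} → 0` as `δ → 0`) if and only if
`lim_{κ→∞} sup_{f∈Q} ∫_{|ξ|≥κ} (1+|ξ|)^{2s} |f̂(ξ)|² dξ = 0`. -/
theorem statement_0 (s : ℝ) (Q : Set (ℝ → ℂ))
    (hmeas : ∀ w ∈ Q, AEStronglyMeasurable w (volume : Measure ℝ))
    (hbdd : ∃ C : ℝ, ∀ w ∈ Q, HsNormSqW s w ≤ ENNReal.ofReal C) :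
    (∀ ε > (0 : ℝ), ∃ δ > (0 : ℝ), ∀ w ∈ Q, ∀ y : ℝ, |y| < δ →
        HsNormSqW s (fun ξ => (Complex.exp (Complex.I * y * ξ) - 1) * w ξ) ≤
          ENNReal.ofReal (ε ^ 2))
      ↔ Tendsto (fun κ : ℝ => ⨆ w ∈ Q, ∫⁻ ξ in {ξ : ℝ | κ ≤ |ξ|},
          ENNReal.ofReal ((1 + |ξ|) ^ (2 * s)) * (‖w ξ‖₊ : ℝ≥0∞) ^ 2)
          atTop (𝓝 0) := by
  obtain ⟨C, hC⟩ := hbdd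
  change _ ↔ Tendsto (fun κ => ⨆ w ∈ Q, tailMass (hsDensity s w) κ) atTop (𝓝 0)
  simp only [HsNormSqW_exp_mul_sub_one_mul]
  constructor
  · intro h
    refine tendsto_iSup_tailMass_of_translationModulus_le
      (fun w hw => aemeasurable_hsDensity s (hmeas w hw)) fun r hr => ?_
    simpa only [Real.sq_sqrt hr.le] using h √r (Real.sqrt_pos.2 hr)
  · intro h ε hε
    exact translationModulus_le_of_tendsto_iSup_tailMass ofReal_ne_top hC h (ε ^ 2)
      (by positivity)

end
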